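/- Suppose m ≥ 0, n ≥ 1 and ε ∈ {1,−1}, and set ε' = (−1)^{m+n−1} ε. Then in ℤ[x_1,…,x_m,y_1,…,y_n]: R^{(m,n)}_ε = det( y_i^{j−1} · ∏_{k=1}^{m}(1−x_k y_i) + ε' · y_i^{n−j} · ∏_{k=1}^{m}(y_i−x_k) )_{1≤i,j≤n}, where R^{(m,n)}_ε := Σ_{J_1 ⊔ J_2 = {1,…,n}} ε^{#J_2} · (−1)^{δ(J_1,J_2)} · G^{(m,n)}_{J_1,J_2}. -/

import Mathlib

/- Setting: the polynomial ring ℤ[x_1,…,x_m,y_1,…,y_n], realized as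
`MvPolynomial (Fin m ⊕ Fin n) ℤ` with `Xv i = x_{i+1}` and `Yv j = y_{j+1}`.
For a partition `{1,…,n} = J_1 ⊔ J_2` (encoded by `J = J_1`, `Jᶜ = J_2`):
`Fpoly = ∏_{i<j≤m}(1−x_ix_j) ∏_{i<j≤n}(1−y_iy_j)(y_j−y_i)`,
`Gpoly J = ∏_{i≤m,j∈J_1}(1−x_iy_j) ∏_{i≤m,j∈J_2}(x_i−y_j) ∏_{i<j∈J_1}(y_j−y_i)
           ∏_{i∈J_1,j∈J_2}(1−y_iy_j) ∏_{i<j∈J_2}(y_i−y_j)`,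
`ddelta J = #{(i,j) ∈ J_1×J_2 : i < j}`. -/

noncomputable section

def Xv (m n : ℕ) (i : Fin m) : MvPolynomial (Fin m ⊕ Fin n) ℤ := MvPolynomial.X (Sum.inl i)

def Yv (m n : ℕ) (j : Fin n) : MvPolynomial (Fin m ⊕ Fin n) ℤ := MvPolynomial.X (Sum.inr j)

def Fpoly (m n : ℕ) : MvPolynomial (Fin m ⊕ Fin n) ℤ :=
  (∏ i : Fin m, ∏ j ∈ Finset.univ.filter (fun j => i < j), (1 - Xv m n i * Xv m n j)) *
    ∏ i : Fin n, ∏ j ∈ Finset.univ.filter (fun j => i < j),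
      ((1 - Yv m n i * Yv m n j) * (Yv m n j - Yv m n i))

def Gpoly (m n : ℕ) (J : Finset (Fin n)) : MvPolynomial (Fin m ⊕ Fin n) ℤ :=
  (∏ i : Fin m, ∏ j ∈ J, (1 - Xv m n i * Yv m n j)) *
    (∏ i : Fin m, ∏ j ∈ Jᶜ, (Xv m n i - Yv m n j)) *
    (∏ i ∈ J, ∏ j ∈ J.filter (fun j => i < j), (Yv m n j - Yv m n i)) *
    (∏ i ∈ J, ∏ j ∈ Jᶜ, (1 - Yv m n i * Yv m n j)) *
    (∏ i ∈ Jᶜ, ∏ j ∈ Jᶜ.filter (fun j => i < j), (Yv m n i - Yv m n j))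

def ddelta (n : ℕ) (J : Finset (Fin n)) : ℕ :=
  ((J ×ˢ Jᶜ).filter (fun p => p.1 < p.2)).card

/-!
Expanding the determinant by multilinearity in the rows gives a sum over the set `J` of rows
taken from the first summand. Pulling out the row factors leaves the projective Vandermonde
matrix with `(vᵢ, wᵢ) = (yᵢ, 1)` for `i ∈ J` and `(1, yᵢ)` otherwise, whose determinant is
`∏_{i<j} (vⱼwᵢ − vᵢwⱼ)`. Sorting these factors by the membership of `i` and `j` gives the
`y`-part of `G_J` up to the sign `(−1)^δ(Jᶜ,J)`, and `δ(J,Jᶜ) + δ(Jᶜ,J) = |J||Jᶜ|` turns the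
remaining signs into `ε'^|Jᶜ|`.
-/

open Finset Matrix

theorem Matrix.det_add_eq_sum_piecewise {R ι : Type*} [CommRing R] [DecidableEq ι] [Fintype ι]
    (M N : Matrix ι ι R) : (M + N).det = ∑ s : Finset ι, det (s.piecewise M N) :=
  detRowAlternating.map_add_univ M N

@[to_additive]
theorem Finset.prod_prod_filter_lt_mul_prod_prod_filter_lt {M ι : Type*} [CommMonoid M]
    [LinearOrder ι] {s t : Finset ι} (hst : Disjoint s t) (g : ι → ι → M) :
    (∏ i ∈ s, ∏ j ∈ t with i < j, g i j) * ∏ i ∈ t, ∏ j ∈ s with i < j, g j i =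
      ∏ i ∈ s, ∏ j ∈ t, g i j := by
  simp only [prod_filter]
  rw [prod_comm (s := t), ← prod_mul_distrib]
  refine prod_congr rfl fun i hi => ?_
  rw [← prod_mul_distrib]
  refine prod_congr rfl fun j hj => ?_
  rcases (ne_of_mem_of_not_mem hi (disjoint_right.1 hst hj)).lt_or_gt with h | h <;>
    simp [h, h.not_gt]

theorem Finset.prod_prod_sub_comm {R ι κ : Type*} [CommRing R] (s : Finset ι) (t : Finset κ)
    (f : ι → R) (g : κ → R) :
    ∏ i ∈ s, ∏ j ∈ t, (f i - g j) = (-1) ^ (#s * #t) * ∏ j ∈ t, ∏ i ∈ s, (g j - f i) := by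
  simp_rw [prod_comm (s := s), ← neg_sub (g _), prod_neg, prod_mul_distrib, prod_const, pow_mul]

section

variable {n : ℕ}

theorem ddelta_eq_sum (J : Finset (Fin n)) : ddelta n J = ∑ i ∈ J, #{j ∈ Jᶜ | i < j} := by
  rw [ddelta, card_filter, sum_product]
  simp only [card_filter]

theorem ddelta_add_ddelta_compl (J : Finset (Fin n)) :
    ddelta n J + ddelta n Jᶜ = #J * #Jᶜ := by
  have := sum_sum_filter_lt_add_sum_sum_filter_lt (disjoint_compl_right (a := J)) fun _ _ => 1
  simp only [sum_const, smul_eq_mul, mul_one] at this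
  rwa [ddelta_eq_sum, ddelta_eq_sum, compl_compl]

theorem pow_card_compl_mul_neg_one_pow_ddelta {R : Type*} [CommRing R] (m : ℕ) (ε : R)
    (J : Finset (Fin n)) :
    ε ^ #Jᶜ * (-1) ^ ddelta n J * (-1) ^ (m * #Jᶜ) =
      ((-1) ^ (m + n - 1) * ε) ^ #Jᶜ * (-1) ^ ddelta n Jᶜ := by
  have hpar : (-1 : R) ^ (ddelta n J + m * #Jᶜ) = (-1) ^ ((m + n - 1) * #Jᶜ + ddelta n Jᶜ) := by
    apply neg_one_pow_congr
    rw [← Nat.even_add]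
    have hsum := ddelta_add_ddelta_compl J
    have hcard : #J + #Jᶜ = n := by simp [card_add_card_compl]
    generalize ddelta n J = d, ddelta n Jᶜ = e, #J = a, #Jᶜ = c at *
    subst hcard
    rcases c with _ | c
    · simp_all
    · have hsub : m + (a + (c + 1)) - 1 = m + a + c := by omega
      have : d + m * (c + 1) + ((m + a + c) * (c + 1) + e) =
          2 * ((a + m) * (c + 1)) + c * (c + 1) := by
        linear_combination hsum
      rw [hsub, this]
      exact (even_two_mul _).add (Nat.even_mul_succ_self c)
  rw [mul_pow, ← pow_mul, pow_add, pow_add] at *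
  linear_combination ε ^ #Jᶜ * hpar

variable {R : Type*} [CommRing R]

theorem det_powers_add_reversed_powers (y u w : Fin n → R) (c : R) :
    (of fun i j : Fin n => y i ^ (j : ℕ) * u i + c * y i ^ (n - 1 - (j : ℕ)) * w i).det =
      ∑ J : Finset (Fin n), (∏ i ∈ J, u i) * (c ^ #Jᶜ * ∏ i ∈ Jᶜ, w i) *
        (projVandermonde (J.piecewise y 1) (J.piecewise 1 y)).det := by
  change (of (fun i j : Fin n => y i ^ (j : ℕ) * u i) +
    of fun i j : Fin n => c * y i ^ (n - 1 - (j : ℕ)) * w i).det = _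
  rw [det_add_eq_sum_piecewise]
  refine sum_congr rfl fun J _ => ?_
  have hrows : J.piecewise (of fun i j : Fin n => y i ^ (j : ℕ) * u i)
      (of fun i j => c * y i ^ (n - 1 - (j : ℕ)) * w i) =
      of fun i j => J.piecewise u (fun i => c * w i) i *
        projVandermonde (J.piecewise y 1) (J.piecewise 1 y) i j := by
    ext i j
    by_cases hi : i ∈ J
    · simp [piecewise, hi, projVandermonde_apply, mul_comm]
    · simp [piecewise, hi, projVandermonde_apply, Nat.sub_sub, add_comm 1 (j : ℕ)]
      ring
  rw [hrows, det_mul_column, prod_piecewise, univ_inter, ← compl_eq_univ_sdiff, prod_mul_distrib,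
    prod_const]

theorem det_projVandermonde_piecewise (J : Finset (Fin n)) (y : Fin n → R) :
    (projVandermonde (J.piecewise y 1) (J.piecewise 1 y)).det =
      (-1) ^ ddelta n Jᶜ * ((∏ i ∈ J, ∏ j ∈ J with i < j, (y j - y i)) *
        (∏ i ∈ J, ∏ j ∈ Jᶜ, (1 - y i * y j)) *
        (∏ i ∈ Jᶜ, ∏ j ∈ Jᶜ with i < j, (y i - y j))) := by
  set v := J.piecewise y 1
  set w := J.piecewise 1 y
  have hsplit (i : Fin n) : ∏ j ∈ Ioi i, (v j * w i - v i * w j) =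
      (∏ j ∈ J with i < j, (v j * w i - v i * w j)) *
        ∏ j ∈ Jᶜ with i < j, (v j * w i - v i * w j) := by
    rw [prod_filter, prod_filter, prod_mul_prod_compl, ← prod_filter, filter_lt_eq_Ioi]
  have hJ : ∀ i ∈ J, ∏ j ∈ Ioi i, (v j * w i - v i * w j) =
      (∏ j ∈ J with i < j, (y j - y i)) * ∏ j ∈ Jᶜ with i < j, (1 - y i * y j) := by
    intro i hi
    rw [hsplit]
    congr 1 <;> refine prod_congr rfl fun j hj => ?_ <;>
      simp_all [v, w]
  have hJc : ∀ i ∈ Jᶜ, ∏ j ∈ Ioi i, (v j * w i - v i * w j) =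
      (-1) ^ #{j ∈ J | i < j} * (∏ j ∈ J with i < j, (1 - y j * y i)) *
        ∏ j ∈ Jᶜ with i < j, (y i - y j) := by
    intro i hi
    rw [hsplit, ← prod_neg]
    congr 1 <;> refine prod_congr rfl fun j hj => ?_ <;>
      simp_all [v, w]
  rw [det_projVandermonde, ← prod_mul_prod_compl J, prod_congr rfl hJ, prod_congr rfl hJc,
    prod_mul_distrib, prod_mul_distrib, prod_mul_distrib, prod_pow_eq_pow_sum, ddelta_eq_sum,
    compl_compl, ← prod_prod_filter_lt_mul_prod_prod_filter_lt disjoint_compl_right]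
  ring

end

theorem statement9_general (m n : ℕ) (ε : ℤ) :
    (∑ J : Finset (Fin n),
        (MvPolynomial.C ε) ^ (Jᶜ.card) * (-1) ^ ddelta n J * Gpoly m n J)
      = Matrix.det (Matrix.of fun i j : Fin n =>
          Yv m n i ^ (j : ℕ) * (∏ k : Fin m, (1 - Xv m n k * Yv m n i)) +
            MvPolynomial.C ((-1) ^ (m + n - 1) * ε) *
              Yv m n i ^ (n - 1 - (j : ℕ)) * (∏ k : Fin m, (Yv m n i - Xv m n k))) := by
  rw [det_powers_add_reversed_powers]
  refine sum_congr rfl fun J _ => ?_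
  rw [det_projVandermonde_piecewise, Gpoly, prod_comm (s := univ) (t := J), prod_prod_sub_comm,
    card_univ, Fintype.card_fin]
  have hsign := pow_card_compl_mul_neg_one_pow_ddelta m
    (MvPolynomial.C ε : MvPolynomial (Fin m ⊕ Fin n) ℤ) J
  simp only [map_mul, map_pow, map_neg, map_one]
  linear_combination (∏ j ∈ J, ∏ k, (1 - Xv m n k * Yv m n j)) *
    (∏ j ∈ Jᶜ, ∏ k, (Yv m n j - Xv m n k)) *
    ((∏ i ∈ J, ∏ j ∈ J with i < j, (Yv m n j - Yv m n i)) *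
      (∏ i ∈ J, ∏ j ∈ Jᶜ, (1 - Yv m n i * Yv m n j)) *
      (∏ i ∈ Jᶜ, ∏ j ∈ Jᶜ with i < j, (Yv m n i - Yv m n j))) * hsign

/-- The determinant representation of `R^{(m,n)}_ε` from the proof of Proposition D.2
(polynomial form, after multiplying the `i`-th row by `y_i^{(m+n−1)/2}`): for `m ≥ 0`,
`n ≥ 1`, `ε = ±1` and `ε' = (−1)^{m+n−1} ε`,
`R^{(m,n)}_ε = det( y_i^{j−1} ∏_k (1−x_k y_i) + ε' y_i^{n−j} ∏_k (y_i−x_k) )_{1≤i,j≤n}`. -/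
theorem statement9 (m n : ℕ) (hn : 1 ≤ n) (ε : ℤ) (hε : ε = 1 ∨ ε = -1) :
    (∑ J : Finset (Fin n),
        (MvPolynomial.C ε) ^ (Jᶜ.card) * (-1) ^ ddelta n J * Gpoly m n J)
      = Matrix.det (Matrix.of fun i j : Fin n =>
          Yv m n i ^ (j : ℕ) * (∏ k : Fin m, (1 - Xv m n k * Yv m n i)) +
            MvPolynomial.C ((-1) ^ (m + n - 1) * ε) *
              Yv m n i ^ (n - 1 - (j : ℕ)) * (∏ k : Fin m, (Yv m n i - Xv m n k))) :=
  statement9_general m n ε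

end
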